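/- The 'before' operation on strategies is functorial: for strategies σ : A ⊸ B, σ' : B ⊸ C, τ : D ⊸ E, τ' : E ⊸ F, one has (σ' ◁ τ') ∘ (σ ◁ τ) = (σ' ∘ σ) ◁ (τ' ∘ τ), where σ ◁ τ is the disjoint union of the orders ≤_σ and ≤_τ. -/

import Mathlib

/-!
Games are given by a type of moves `α`, a polarity function `α → Bool`
(`false` = Opponent = −1, `true` = Proponent = +1) and a well-founded partial
order (the causality order).
-/

/-- Disjoint union of two relations on a sum type. -/
def sumRel {α β : Type*} (r : α → α → Prop) (s : β → β → Prop) :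
    α ⊕ β → α ⊕ β → Prop
  | Sum.inl a, Sum.inl a' => r a a'
  | Sum.inr b, Sum.inr b' => s b b'
  | _, _ => False

/-- The causality order of a game: a well-founded partial order. -/
def IsGame {α : Type*} (le : α → α → Prop) : Prop :=
  (∀ a, le a a) ∧ (∀ a b c, le a b → le b c → le a c) ∧
  (∀ a b, le a b → le b a → a = b) ∧
  WellFounded (fun a b => le a b ∧ a ≠ b)

/-- The polarity function of the arrow game `A ⊸ B = A* ⊗ B`: polarities are
inverted on the left component. -/
def arrowPol {α β : Type*} (lamA : α → Bool) (lamB : β → Bool) : α ⊕ β → Bool :=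
  Sum.elim (fun a => !(lamA a)) lamB

/-- The causality order of the tensor game `A ⊗ B` (or of `A ⊸ B`). -/
def tensLe {α β : Type*} (leA : α → α → Prop) (leB : β → β → Prop) :
    α ⊕ β → α ⊕ β → Prop :=
  sumRel leA leB

/-- A strategy on the game `(lam, leG)`: a partial order `les` on moves such
that `m <ₛ n` implies `m` is Opponent and `n` is Proponent (polarity), and the
transitive closure of `les ∪ leG` is still a partial order (acyclicity). -/
def IsStrategy {α : Type*} (lam : α → Bool) (leG : α → α → Prop)
    (les : α → α → Prop) : Prop :=
  (∀ a, les a a) ∧ (∀ a b c, les a b → les b c → les a c) ∧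
  (∀ a b, les a b → les b a → a = b) ∧
  (∀ a b, les a b → a ≠ b → lam a = false ∧ lam b = true) ∧
  (∀ a b, Relation.ReflTransGen (fun x y => les x y ∨ leG x y) a b →
          Relation.ReflTransGen (fun x y => les x y ∨ leG x y) b a → a = b)

/-- Direct image of a relation along a function. -/
def relMap {α β : Type*} (f : α → β) (r : α → α → Prop) : β → β → Prop :=
  fun x y => ∃ a a', r a a' ∧ f a = x ∧ f a' = y

/-- The composite of a strategy `σ` on `A ⊸ B` and a strategy `τ` on `B ⊸ C`:
the restriction to the moves of `A` and `C` of the (reflexive) transitive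
closure of the union of `≤σ` and `≤τ`, both seen as relations on the moves of
`A`, `B` and `C`. -/
def stratComp {α β γ : Type*} (σ : α ⊕ β → α ⊕ β → Prop)
    (τ : β ⊕ γ → β ⊕ γ → Prop) : α ⊕ γ → α ⊕ γ → Prop :=
  fun x y =>
    Relation.ReflTransGen
      (fun u v => relMap (Sum.map id Sum.inl) σ u v ∨ relMap Sum.inr τ u v)
      (Sum.map id Sum.inr x) (Sum.map id Sum.inr y)

/-- The causality order of the game `A ◁ B` (`A` before `B`). -/
def beforeLe {α β : Type*} (leA : α → α → Prop) (leB : β → β → Prop) :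
    α ⊕ β → α ⊕ β → Prop :=
  Relation.TransGen
    (fun x y => tensLe leA leB x y ∨ ∃ a b, x = Sum.inl a ∧ y = Sum.inr b)

/-- The strategy `σ ◁ τ : (A ◁ C) ⊸ (B ◁ D)` associated to strategies
`σ : A ⊸ B` and `τ : C ⊸ D`: the disjoint union of the orders `≤σ` and `≤τ`. -/
def stratBefore {A B C D : Type*}
    (σ : A ⊕ B → A ⊕ B → Prop) (τ : C ⊕ D → C ⊕ D → Prop) :
    (A ⊕ C) ⊕ (B ⊕ D) → (A ⊕ C) ⊕ (B ⊕ D) → Prop :=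
  fun x y => relMap (Sum.map Sum.inl Sum.inl) σ x y ∨
             relMap (Sum.map Sum.inr Sum.inr) τ x y


/-! The moves on which `σ ◁ τ` interacts with `σ' ◁ τ'` are, after reordering summands, the
disjoint union of those on which `σ` interacts with `σ'` and `τ` with `τ'`, and every step of
the interaction stays inside one of the two parts. Since the reflexive-transitive closure of a
disjoint union of relations is the disjoint union of the closures, the composite splits in the
same way. -/

open Relation Sum

theorem Relation.reflTransGen_liftRel_iff {α β : Type*} {r : α → α → Prop}
    {s : β → β → Prop} {x y : α ⊕ β} :
    ReflTransGen (LiftRel r s) x y ↔ LiftRel (ReflTransGen r) (ReflTransGen s) x y := by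
  constructor
  · intro h
    induction h with
    | refl => cases x <;> constructor <;> rfl
    | tail _ hyz ih =>
      cases hyz with
      | inl h => exact match ih with | .inl h' => .inl (h'.tail h)
      | inr h => exact match ih with | .inr h' => .inr (h'.tail h)
  · rintro (h | h)
    · exact ReflTransGen.lift inl (fun _ _ => LiftRel.inl) _ _ h
    · exact ReflTransGen.lift inr (fun _ _ => LiftRel.inr) _ _ h

theorem Relation.reflTransGen_comap_equiv {α β : Type*} (e : α ≃ β) {r : β → β → Prop}
    {x y : α} : ReflTransGen (fun a b => r (e a) (e b)) x y ↔ ReflTransGen r (e x) (e y) := by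
  refine ⟨ReflTransGen.lift e (fun _ _ h => h) x y, fun h => ?_⟩
  simpa [Function.onFun] using ReflTransGen.lift (p := fun a b => r (e a) (e b)) e.symm
    (fun a b h => by simpa [Function.onFun] using h) _ _ h

theorem stratBefore_iff_liftRel {A B C D : Type*} (σ : A ⊕ B → A ⊕ B → Prop)
    (τ : C ⊕ D → C ⊕ D → Prop) (x y : (A ⊕ C) ⊕ (B ⊕ D)) :
    stratBefore σ τ x y ↔
      LiftRel σ τ (Equiv.sumSumSumComm A C B D x) (Equiv.sumSumSumComm A C B D y) := by
  rcases x with (_ | _) | (_ | _) <;> rcases y with (_ | _) | (_ | _) <;>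
    simp [stratBefore, relMap]

def interactionStep {α β γ : Type*} (σ : α ⊕ β → α ⊕ β → Prop) (τ : β ⊕ γ → β ⊕ γ → Prop) :
    α ⊕ (β ⊕ γ) → α ⊕ (β ⊕ γ) → Prop :=
  fun u v => relMap (Sum.map id Sum.inl) σ u v ∨ relMap Sum.inr τ u v

theorem stratComp_iff_reflTransGen {α β γ : Type*} (σ : α ⊕ β → α ⊕ β → Prop)
    (τ : β ⊕ γ → β ⊕ γ → Prop) (x y : α ⊕ γ) :
    stratComp σ τ x y ↔
      ReflTransGen (interactionStep σ τ) (Sum.map id Sum.inr x) (Sum.map id Sum.inr y) :=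
  Iff.rfl

def beforeInteractionEquiv (A B C D E F : Type*) :
    (A ⊕ D) ⊕ ((B ⊕ E) ⊕ (C ⊕ F)) ≃ (A ⊕ (B ⊕ C)) ⊕ (D ⊕ (E ⊕ F)) :=
  (Equiv.sumCongr (Equiv.refl _) (Equiv.sumSumSumComm B E C F)).trans
    (Equiv.sumSumSumComm A D (B ⊕ C) (E ⊕ F))

theorem interactionStep_stratBefore {A B C D E F : Type*}
    (σ : A ⊕ B → A ⊕ B → Prop) (σ' : B ⊕ C → B ⊕ C → Prop)
    (τ : D ⊕ E → D ⊕ E → Prop) (τ' : E ⊕ F → E ⊕ F → Prop) :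
    interactionStep (stratBefore σ τ) (stratBefore σ' τ') = fun u v =>
      LiftRel (interactionStep σ σ') (interactionStep τ τ') (beforeInteractionEquiv A B C D E F u)
        (beforeInteractionEquiv A B C D E F v) := by
  ext u v
  rcases u with (_ | _) | ((_ | _) | (_ | _)) <;>
    rcases v with (_ | _) | ((_ | _) | (_ | _)) <;>
    simp [interactionStep, beforeInteractionEquiv, stratBefore_iff_liftRel, relMap]

theorem stratBefore_functorial_general {A B C D E F : Type*}
    (σ : A ⊕ B → A ⊕ B → Prop) (σ' : B ⊕ C → B ⊕ C → Prop)
    (τ : D ⊕ E → D ⊕ E → Prop) (τ' : E ⊕ F → E ⊕ F → Prop) :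
    ∀ x y, stratComp (stratBefore σ τ) (stratBefore σ' τ') x y ↔
      stratBefore (stratComp σ σ') (stratComp τ τ') x y := by
  intro x y
  rw [stratComp_iff_reflTransGen, interactionStep_stratBefore,
    reflTransGen_comap_equiv, reflTransGen_liftRel_iff]
  rcases x with (_ | _) | (_ | _) <;> rcases y with (_ | _) | (_ | _) <;>
    simp [beforeInteractionEquiv, stratBefore_iff_liftRel, stratComp_iff_reflTransGen]

/-- The 'before' operation on strategies is functorial:
`(σ' ◁ τ') ∘ (σ ◁ τ) = (σ' ∘ σ) ◁ (τ' ∘ τ)` for strategies `σ : A ⊸ B`,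
`σ' : B ⊸ C`, `τ : D ⊸ E`, `τ' : E ⊸ F`. -/
theorem stratBefore_functorial {A B C D E F : Type*}
    (lamA : A → Bool) (lamB : B → Bool) (lamC : C → Bool)
    (lamD : D → Bool) (lamE : E → Bool) (lamF : F → Bool)
    (leA : A → A → Prop) (leB : B → B → Prop) (leC : C → C → Prop)
    (leD : D → D → Prop) (leE : E → E → Prop) (leF : F → F → Prop)
    (hA : IsGame leA) (hB : IsGame leB) (hC : IsGame leC)
    (hD : IsGame leD) (hE : IsGame leE) (hF : IsGame leF)
    (σ : A ⊕ B → A ⊕ B → Prop) (σ' : B ⊕ C → B ⊕ C → Prop)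
    (τ : D ⊕ E → D ⊕ E → Prop) (τ' : E ⊕ F → E ⊕ F → Prop)
    (hσ : IsStrategy (arrowPol lamA lamB) (tensLe leA leB) σ)
    (hσ' : IsStrategy (arrowPol lamB lamC) (tensLe leB leC) σ')
    (hτ : IsStrategy (arrowPol lamD lamE) (tensLe leD leE) τ)
    (hτ' : IsStrategy (arrowPol lamE lamF) (tensLe leE leF) τ') :
    ∀ x y, stratComp (stratBefore σ τ) (stratBefore σ' τ') x y ↔
      stratBefore (stratComp σ σ') (stratComp τ τ') x y :=
  stratBefore_functorial_general σ σ' τ τ'
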